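/- arXiv:1407.1845 — 2 statements merged into one kernel-verified Lean document; each statement's English description precedes it below -/
import Mathlib

section
/- Let $p$ be a prime, $d \geq 1$, and let $P_{p^d} \leq \mathfrak{S}_{p^d}$ denote the iterated wreath product Sylow $p$-subgroup of $\mathfrak{S}_{p^d}$. Let $P \leq P_{p^d}$ be a subgroup such that (i) $P$ contains a subgroup $R$ that is $\mathfrak{S}_{p^d}$-conjugate to $P_{p^{d-1}}$, and (ii) $P$ contains an elementary abelian subgroup $E$ of order $p^d$ acting regularly on $\{1,\ldots,p^d\}$. Then $P = P_{p^d}$. -/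
lemma cycBound {p d j x : ℕ} (h1 : x < p ^ j) (h2 : j ≤ d) (h3 : 1 ≤ j) (a : ℕ) :
    (x + a) % p ^ j < p ^ d := by
  have h0 : 0 < p ^ j := Nat.pos_of_ne_zero (by omega)
  have hpp : 0 < p := by
    rcases Nat.eq_zero_or_pos p with h | h
    · subst h; rw [Nat.zero_pow (by omega : 0 < j)] at h0; omega
    · exact h
  exact lt_of_lt_of_le (Nat.mod_lt _ h0) (Nat.pow_le_pow_right hpp h2)

/-- The generator `g_j` of the iterated wreath product Sylow `p`-subgroup of `𝔖_{p^d}`: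
the product of the `p^{j-1}` disjoint `p`-cycles
`(k, k+p^{j-1}, …, k+(p-1)p^{j-1})`, `1 ≤ k ≤ p^{j-1}` (here written `0`-indexed:
`x ↦ (x + p^{j-1}) mod p^j` on `{0, …, p^j - 1}`, fixing all other points). -/
def cycPerm (p d j : ℕ) : Equiv.Perm (Fin (p ^ d)) where
  toFun x :=
    if h : (x : ℕ) < p ^ j ∧ j ≤ d ∧ 1 ≤ j then
      ⟨((x : ℕ) + p ^ (j - 1)) % p ^ j, cycBound h.1 h.2.1 h.2.2 _⟩
    else x
  invFun x :=
    if h : (x : ℕ) < p ^ j ∧ j ≤ d ∧ 1 ≤ j then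
      ⟨((x : ℕ) + (p ^ j - p ^ (j - 1))) % p ^ j, cycBound h.1 h.2.1 h.2.2 _⟩
    else x
  left_inv := by
    intro x
    by_cases h : (x : ℕ) < p ^ j ∧ j ≤ d ∧ 1 ≤ j
    · have h0 : 0 < p ^ j := Nat.pos_of_ne_zero (by omega)
      have hle : p ^ (j - 1) ≤ p ^ j := by
        have hpp : 0 < p := by
          rcases Nat.eq_zero_or_pos p with hz | hz
          · subst hz; rw [Nat.zero_pow (by omega : 0 < j)] at h0; omega
          · exact hz
        exact Nat.pow_le_pow_right hpp (by omega)
      simp only [dif_pos h]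
      have h1 : ((x : ℕ) + p ^ (j - 1)) % p ^ j < p ^ j := Nat.mod_lt _ h0
      rw [dif_pos ⟨h1, h.2⟩]
      apply Fin.ext
      simp only [Fin.val_mk]
      rw [Nat.mod_add_mod]
      have : (x : ℕ) + p ^ (j - 1) + (p ^ j - p ^ (j - 1)) = (x : ℕ) + p ^ j := by omega
      rw [this, Nat.add_mod_right, Nat.mod_eq_of_lt h.1]
    · simp only [dif_neg h]
  right_inv := by
    intro x
    by_cases h : (x : ℕ) < p ^ j ∧ j ≤ d ∧ 1 ≤ j
    · have h0 : 0 < p ^ j := Nat.pos_of_ne_zero (by omega)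
      have hle : p ^ (j - 1) ≤ p ^ j := by
        have hpp : 0 < p := by
          rcases Nat.eq_zero_or_pos p with hz | hz
          · subst hz; rw [Nat.zero_pow (by omega : 0 < j)] at h0; omega
          · exact hz
        exact Nat.pow_le_pow_right hpp (by omega)
      simp only [dif_pos h]
      have h1 : ((x : ℕ) + (p ^ j - p ^ (j - 1))) % p ^ j < p ^ j := Nat.mod_lt _ h0
      rw [dif_pos ⟨h1, h.2⟩]
      apply Fin.ext
      simp only [Fin.val_mk]
      rw [Nat.mod_add_mod]
      have : (x : ℕ) + (p ^ j - p ^ (j - 1)) + p ^ (j - 1) = (x : ℕ) + p ^ j := by omega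
      rw [this, Nat.add_mod_right, Nat.mod_eq_of_lt h.1]
    · simp only [dif_neg h]

/-- `Pgrp p d k` is the subgroup of `𝔖_{p^d}` generated by `g_1, …, g_k`.
For `k = d` this is the Sylow `p`-subgroup `P_{p^d}`; for `k = d - 1` it is the
standard copy of `P_{p^{d-1}}` supported on the first `p^{d-1}` points. -/
def Pgrp (p d k : ℕ) : Subgroup (Equiv.Perm (Fin (p ^ d))) :=
  Subgroup.closure ((fun j => cycPerm p d j) '' (Set.Icc 1 k))


/-!
Read the points of `Fin (p ^ d)` in base `p`. A permutation is a wreath permutation if it preserves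
the nested block systems `x ↦ x / p ^ j` and rotates the `p` sub-blocks of every block. By
induction on `k`, `Pgrp p d k` is exactly the group of wreath permutations supported on
`[0, p ^ k)`: such an element, corrected by a power of `g_k`, is the product of its restrictions
to the `p` blocks of level `k - 1`, and each restriction is conjugate by a power of `g_k` into
`Pgrp p d (k - 1)`.

For the theorem, each element of `R = σ P_{p^{d-1}} σ⁻¹ ≤ P` fixes the image under `σ` of a point
outside the first top-level block; being a wreath permutation, it then preserves every top-level
block. So `R` lies in the base-group factor `K_i` of a single top-level block, and equals it
because both have the order of `P_{p^{d-1}}`. The regular subgroup `E ≤ P` moves block `i` onto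
every other block, so `P` contains every `K_j`, hence the whole base group, and `E` supplies the
top-level rotations.
-/

open Equiv MulAction

section IteratedWreath

variable {p d : ℕ}

/-- Points of `Fin (p ^ d)` are read in base `p`; the level-`j` blocks are the fibres of
`x ↦ x / p ^ j`. `g` is a wreath permutation if on every level-`(j+1)` block it rotates the `p`
level-`j` sub-blocks, i.e. it shifts their digit `x / p ^ j mod p` by a constant. -/
def IsWreathPerm (p d : ℕ) (g : Perm (Fin (p ^ d))) : Prop :=
  ∀ j < d, ∀ x y : Fin (p ^ d), (x : ℕ) / p ^ (j + 1) = (y : ℕ) / p ^ (j + 1) →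
    ((((g x : ℕ) / p ^ j : ℕ) : ZMod p) - (((g y : ℕ) / p ^ j : ℕ) : ZMod p)) =
      (((x : ℕ) / p ^ j : ℕ) : ZMod p) - (((y : ℕ) / p ^ j : ℕ) : ZMod p)

lemma natCast_div_pow_eq_of_modEq {a b j : ℕ} (h : a ≡ b [MOD p ^ (j + 1)]) :
    ((a / p ^ j : ℕ) : ZMod p) = ((b / p ^ j : ℕ) : ZMod p) := by
  rw [ZMod.natCast_eq_natCast_iff', ← Nat.mod_mul_right_div_self, ← Nat.mod_mul_right_div_self,
    ← pow_succ, h]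

lemma div_pow_eq_of_natCast_eq {a b j : ℕ} (ha : a < p ^ (j + 1)) (hb : b < p ^ (j + 1))
    (h : ((a / p ^ j : ℕ) : ZMod p) = ((b / p ^ j : ℕ) : ZMod p)) : a / p ^ j = b / p ^ j := by
  rw [ZMod.natCast_eq_natCast_iff', Nat.mod_eq_of_lt, Nat.mod_eq_of_lt] at h
  · exact h
  all_goals exact Nat.div_lt_of_lt_mul (by rwa [← pow_succ])

lemma div_pow_succ_eq {a b j : ℕ} (h : a / p ^ j = b / p ^ j) :
    a / p ^ (j + 1) = b / p ^ (j + 1) := by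
  rw [pow_succ, ← Nat.div_div_eq_div_mul, ← Nat.div_div_eq_div_mul, h]

lemma div_pow_eq_of_le {a b j l : ℕ} (hjl : j ≤ l) (h : a / p ^ j = b / p ^ j) :
    a / p ^ l = b / p ^ l := by
  induction l, hjl using Nat.le_induction with
  | base => exact h
  | succ l _ ih => exact div_pow_succ_eq ih

namespace IsWreathPerm

variable {g h : Perm (Fin (p ^ d))}

lemma div_pow_eq (hg : IsWreathPerm p d g) {j : ℕ} (hj : j ≤ d) {x y : Fin (p ^ d)}
    (hxy : (x : ℕ) / p ^ j = (y : ℕ) / p ^ j) :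
    ((g x : ℕ) / p ^ j) = (g y : ℕ) / p ^ j := by
  induction hj' : d - j generalizing j with
  | zero =>
    obtain rfl : j = d := by omega
    rw [Nat.div_eq_of_lt (g x).2, Nat.div_eq_of_lt (g y).2]
  | succ m ih =>
    have hup : ((g x : ℕ) / p ^ (j + 1)) = (g y : ℕ) / p ^ (j + 1) :=
      ih (by omega) (div_pow_succ_eq hxy) (by omega)
    have hdigit := hg j (by omega) x y (div_pow_succ_eq hxy)
    rw [hxy, sub_self, sub_eq_zero, ZMod.natCast_eq_natCast_iff'] at hdigit
    rw [pow_succ, ← Nat.div_div_eq_div_mul, ← Nat.div_div_eq_div_mul] at hup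
    rw [← Nat.div_add_mod ((g x : ℕ) / p ^ j) p, ← Nat.div_add_mod ((g y : ℕ) / p ^ j) p, hup,
      hdigit]

lemma mul (hg : IsWreathPerm p d g) (hh : IsWreathPerm p d h) : IsWreathPerm p d (g * h) := by
  intro j hj x y hxy
  rw [Perm.mul_apply, Perm.mul_apply, hg j hj _ _ (hh.div_pow_eq hj hxy), hh j hj x y hxy]

lemma pow (hg : IsWreathPerm p d g) (n : ℕ) : IsWreathPerm p d (g ^ n) := by
  induction n with
  | zero => exact fun _ _ _ _ _ => rfl
  | succ n ih => exact pow_succ g n ▸ ih.mul hg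

end IsWreathPerm

def wreathSubgroup (p d : ℕ) : Subgroup (Perm (Fin (p ^ d))) where
  carrier := {g | IsWreathPerm p d g}
  one_mem' _ _ _ _ _ := rfl
  mul_mem' := IsWreathPerm.mul
  inv_mem' {g} hg := by
    obtain ⟨n, hn⟩ := mem_powers_iff_mem_zpowers.mpr (inv_mem (Subgroup.mem_zpowers g))
    exact hn ▸ IsWreathPerm.pow hg n

lemma cycPerm_apply_of_lt {m : ℕ} (hm : m < d) {x : Fin (p ^ d)} (hx : (x : ℕ) < p ^ (m + 1)) :
    (cycPerm p d (m + 1) x : ℕ) = ((x : ℕ) + p ^ m) % p ^ (m + 1) := by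
  simp only [cycPerm, Equiv.coe_fn_mk, Nat.add_sub_cancel,
    dif_pos (show _ ∧ m + 1 ≤ d ∧ 1 ≤ m + 1 from ⟨hx, hm, by omega⟩)]

lemma cycPerm_apply_of_not_lt {j : ℕ} {x : Fin (p ^ d)} (hx : ¬ (x : ℕ) < p ^ j) :
    cycPerm p d j x = x :=
  dif_neg fun h => hx h.1

lemma cycPerm_pow_apply {m : ℕ} (hm : m < d) (n : ℕ) {x : Fin (p ^ d)}
    (hx : (x : ℕ) < p ^ (m + 1)) :
    ((cycPerm p d (m + 1) ^ n) x : ℕ) = ((x : ℕ) + n * p ^ m) % p ^ (m + 1) := by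
  induction n with
  | zero => simp [Nat.mod_eq_of_lt hx]
  | succ n ih =>
    have hlt : ((cycPerm p d (m + 1) ^ n) x : ℕ) < p ^ (m + 1) :=
      ih ▸ Nat.mod_lt _ ((Nat.zero_le _).trans_lt hx)
    rw [pow_succ', Perm.mul_apply, cycPerm_apply_of_lt hm hlt, ih, Nat.mod_add_mod, add_one_mul,
      add_assoc]

lemma natCast_div_pow_cycPerm_apply (hp : 0 < p) {m l : ℕ} (hm : m < d) (x : Fin (p ^ d)) :
    (((cycPerm p d (m + 1) x : ℕ) / p ^ l : ℕ) : ZMod p) =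
      (((x : ℕ) / p ^ l : ℕ) : ZMod p) + if (x : ℕ) < p ^ (m + 1) ∧ l = m then 1 else 0 := by
  by_cases hx : (x : ℕ) < p ^ (m + 1)
  · rw [cycPerm_apply_of_lt hm hx]
    rcases lt_trichotomy l m with hlt | rfl | hgt
    · rw [if_neg (by omega), add_zero]
      apply natCast_div_pow_eq_of_modEq
      calc ((x : ℕ) + p ^ m) % p ^ (m + 1) ≡ (x : ℕ) + p ^ m [MOD p ^ (l + 1)] :=
            (Nat.mod_modEq _ _).of_dvd (pow_dvd_pow p (by omega))
        _ ≡ (x : ℕ) + 0 [MOD p ^ (l + 1)] :=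
            Nat.ModEq.add_left _ (Nat.modEq_zero_iff_dvd.mpr (pow_dvd_pow p hlt))
    · rw [if_pos ⟨hx, rfl⟩, natCast_div_pow_eq_of_modEq (Nat.mod_modEq _ _),
        Nat.add_div_right _ (pow_pos hp _)]
      push_cast
      ring
    · have hle : p ^ (m + 1) ≤ p ^ l := Nat.pow_le_pow_right hp hgt
      rw [if_neg (by omega), add_zero, Nat.div_eq_of_lt (hx.trans_le hle),
        Nat.div_eq_of_lt ((Nat.mod_lt _ (pow_pos hp _)).trans_le hle)]
  · rw [cycPerm_apply_of_not_lt hx, if_neg (by tauto), add_zero]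

lemma cycPerm_mem_wreathSubgroup (hp : 0 < p) (j : ℕ) : cycPerm p d j ∈ wreathSubgroup p d := by
  by_cases hj : 1 ≤ j ∧ j ≤ d
  · obtain ⟨m, rfl⟩ : ∃ m, j = m + 1 := ⟨j - 1, by omega⟩
    intro l hl x y hxy
    have hlt : ∀ a : ℕ, a < p ^ (m + 1) ↔ a / p ^ (m + 1) = 0 := fun a => by
      rw [Nat.div_eq_zero_iff, or_iff_right (pow_pos hp _).ne']
    rw [natCast_div_pow_cycPerm_apply hp hj.2 x, natCast_div_pow_cycPerm_apply hp hj.2 y]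
    by_cases hlm : l = m
    · subst hlm
      simp only [and_true, hlt, hxy]
      split_ifs <;> ring
    · simp only [hlm, and_false, if_false, add_zero]
  · rw [show cycPerm p d j = 1 from Equiv.ext fun x => dif_neg (by tauto)]
    exact one_mem _

lemma div_pow_lt {a k : ℕ} (ha : a < p ^ (k + 1)) : a / p ^ k < p :=
  Nat.div_lt_of_lt_mul (by rwa [← pow_succ])

lemma mul_pow_lt (hp : 0 < p) {i k : ℕ} (hi : i < p) : i * p ^ k < p ^ (k + 1) := by
  rw [pow_succ']
  exact Nat.mul_lt_mul_of_pos_right hi (pow_pos hp k)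

def blockSubgroup (p d k i : ℕ) : Subgroup (Perm (Fin (p ^ d))) :=
  wreathSubgroup p d ⊓
    fixingSubgroup (Perm (Fin (p ^ d))) {x : Fin (p ^ d) | (x : ℕ) / p ^ k ≠ i}

variable {k i : ℕ} {g : Perm (Fin (p ^ d))}

lemma mem_blockSubgroup :
    g ∈ blockSubgroup p d k i ↔
      g ∈ wreathSubgroup p d ∧ ∀ x : Fin (p ^ d), (x : ℕ) / p ^ k ≠ i → g x = x := by
  simp only [blockSubgroup, Subgroup.mem_inf, mem_fixingSubgroup_iff, Perm.smul_def]
  rfl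

lemma div_pow_apply_of_mem_blockSubgroup (hg : g ∈ blockSubgroup p d k i) (x : Fin (p ^ d)) :
    (g x : ℕ) / p ^ k = (x : ℕ) / p ^ k := by
  have hfix := (mem_blockSubgroup.mp hg).2
  by_contra hne
  by_cases hx : (x : ℕ) / p ^ k = i
  · exact hne (congrArg (fun y : Fin (p ^ d) => (y : ℕ) / p ^ k)
      (g.injective (hfix (g x) (hx ▸ hne))))
  · exact hne (by rw [hfix x hx])

lemma apply_lt_of_mem_blockSubgroup (hp : 0 < p) (hg : g ∈ blockSubgroup p d k 0)
    {x : Fin (p ^ d)} (hx : (x : ℕ) < p ^ k) : (g x : ℕ) < p ^ k := by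
  have h := div_pow_apply_of_mem_blockSubgroup hg x
  rwa [(Nat.div_eq_zero_iff_lt (pow_pos hp k)).mpr hx, Nat.div_eq_zero_iff_lt (pow_pos hp k)] at h

lemma blockSubgroup_zero_zero : blockSubgroup p d 0 0 = ⊥ :=
  (Subgroup.eq_bot_iff_forall _).mpr fun g hg => Equiv.ext fun x => Fin.ext <| by
    simpa using div_pow_apply_of_mem_blockSubgroup hg x

lemma Pgrp_le_blockSubgroup (hp : 0 < p) (k : ℕ) : Pgrp p d k ≤ blockSubgroup p d k 0 := by
  rw [Pgrp, Subgroup.closure_le]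
  rintro _ ⟨j, ⟨-, hjk⟩, rfl⟩
  refine mem_blockSubgroup.mpr ⟨cycPerm_mem_wreathSubgroup hp j, fun x hx => ?_⟩
  refine cycPerm_apply_of_not_lt fun hxj => hx ?_
  exact (Nat.div_eq_zero_iff_lt (pow_pos hp k)).mpr (hxj.trans_le (Nat.pow_le_pow_right hp hjk))

lemma Pgrp_mono {k l : ℕ} (hkl : k ≤ l) : Pgrp p d k ≤ Pgrp p d l :=
  Subgroup.closure_mono (Set.image_mono (Set.Icc_subset_Icc_right hkl))

lemma conj_mem_blockSubgroup {e : Perm (Fin (p ^ d))} (he : e ∈ wreathSubgroup p d) (hk : k ≤ d)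
    {z : Fin (p ^ d)} (hz : (z : ℕ) / p ^ k = i) (hg : g ∈ blockSubgroup p d k i) :
    e * g * e⁻¹ ∈ blockSubgroup p d k ((e z : ℕ) / p ^ k) := by
  refine mem_blockSubgroup.mpr ⟨mul_mem (mul_mem he (mem_blockSubgroup.mp hg).1) (inv_mem he),
    fun x hx => ?_⟩
  have hx' : ((e⁻¹ x : Fin (p ^ d)) : ℕ) / p ^ k ≠ i := fun h =>
    hx (by simpa using IsWreathPerm.div_pow_eq he hk (h.trans hz.symm))
  rw [Perm.mul_apply, Perm.mul_apply, (mem_blockSubgroup.mp hg).2 _ hx']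
  exact e.apply_symm_apply x

lemma card_blockSubgroup_le {e : Perm (Fin (p ^ d))} (he : e ∈ wreathSubgroup p d) (hk : k ≤ d)
    (z : Fin (p ^ d)) :
    Nat.card (blockSubgroup p d k ((z : ℕ) / p ^ k)) ≤
      Nat.card (blockSubgroup p d k ((e z : ℕ) / p ^ k)) := by
  rw [← Subgroup.card_map_of_injective (f := (MulAut.conj e).toMonoidHom) (MulEquiv.injective _)]
  exact Subgroup.card_le_of_le (Subgroup.map_le_iff_le_comap.mpr fun g hg =>
    conj_mem_blockSubgroup he hk rfl hg)

def blockRestrict (h : Perm (Fin (p ^ d))) (hh : ∀ x : Fin (p ^ d), (h x : ℕ) / p ^ k = x / p ^ k)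
    (Q : ℕ → Prop) [DecidablePred Q] : Perm (Fin (p ^ d)) :=
  Perm.ofSubtype <|
    h.subtypePerm (p := fun x : Fin (p ^ d) => Q ((x : ℕ) / p ^ k)) fun x => by rw [hh]

section blockRestrict

variable {h : Perm (Fin (p ^ d))} (hh : ∀ x : Fin (p ^ d), (h x : ℕ) / p ^ k = x / p ^ k)
  (Q : ℕ → Prop) [DecidablePred Q]

lemma blockRestrict_apply (x : Fin (p ^ d)) :
    blockRestrict h hh Q x = if Q ((x : ℕ) / p ^ k) then h x else x := by
  split_ifs with hx
  · exact Perm.ofSubtype_subtypePerm_of_mem (p := fun x : Fin (p ^ d) => Q ((x : ℕ) / p ^ k)) _ hx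
  · exact Perm.ofSubtype_subtypePerm_of_not_mem (p := fun x : Fin (p ^ d) => Q ((x : ℕ) / p ^ k))
      _ hx

lemma blockRestrict_mem_wreathSubgroup (hw : h ∈ wreathSubgroup p d) :
    blockRestrict h hh Q ∈ wreathSubgroup p d := by
  intro j hj x y hxy
  by_cases hjk : j + 1 ≤ k
  · have hQ : Q ((x : ℕ) / p ^ k) ↔ Q ((y : ℕ) / p ^ k) := by rw [div_pow_eq_of_le hjk hxy]
    simp only [blockRestrict_apply]
    by_cases hx : Q ((x : ℕ) / p ^ k)
    · rw [if_pos hx, if_pos (hQ.mp hx)]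
      exact hw j hj x y hxy
    · rw [if_neg hx, if_neg (hQ.not.mp hx)]
  · have hdigit : ∀ z : Fin (p ^ d), (blockRestrict h hh Q z : ℕ) / p ^ j = (z : ℕ) / p ^ j := by
      intro z
      rw [blockRestrict_apply]
      split_ifs
      exacts [div_pow_eq_of_le (by omega) (hh z), rfl]
    rw [hdigit x, hdigit y]

end blockRestrict

/-- `h` is the product of its restrictions to the `p` level-`k` blocks below `p ^ (k + 1)`. -/
lemma mem_of_div_pow_apply_eq (hp : 0 < p) {M : Subgroup (Perm (Fin (p ^ d)))}
    (hM : ∀ i < p, blockSubgroup p d k i ≤ M) {h : Perm (Fin (p ^ d))}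
    (hh : h ∈ blockSubgroup p d (k + 1) 0)
    (hpres : ∀ x : Fin (p ^ d), (h x : ℕ) / p ^ k = x / p ^ k) :
    h ∈ M := by
  have hw := (mem_blockSubgroup.mp hh).1
  have hprefix : ∀ m ≤ p, blockRestrict h hpres (· < m) ∈ M := by
    intro m
    induction m with
    | zero =>
      intro _
      convert one_mem M
      ext x
      simp [blockRestrict_apply]
    | succ m ih =>
      intro hm
      have hsplit : blockRestrict h hpres (· < m + 1) =
          blockRestrict h hpres (· < m) * blockRestrict h hpres (· = m) := by
        ext x
        simp only [Perm.mul_apply, blockRestrict_apply]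
        split_ifs <;> simp_all <;> omega
      rw [hsplit]
      refine mul_mem (ih (by omega)) (hM m (by omega) (mem_blockSubgroup.mpr
        ⟨blockRestrict_mem_wreathSubgroup hpres _ hw, fun x hx => ?_⟩))
      rw [blockRestrict_apply, if_neg hx]
  convert hprefix p le_rfl
  ext x
  rw [blockRestrict_apply]
  split_ifs with hx
  · rfl
  · refine congrArg _ ((mem_blockSubgroup.mp hh).2 x ?_)
    rw [pow_succ, ← Nat.div_div_eq_div_mul]
    exact (Nat.div_pos (not_lt.mp hx) hp).ne'

/-- Within a level-`(k+1)` block, a wreath permutation shifts all level-`k` digits by the same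
amount, so if it keeps one point in its level-`k` block it keeps every point there. -/
lemma div_pow_apply_eq_of_div_pow_apply_eq (hp : 0 < p) (hk : k < d)
    (hg : g ∈ blockSubgroup p d (k + 1) 0) {z : Fin (p ^ d)} (hz : (z : ℕ) < p ^ (k + 1))
    (hgz : (g z : ℕ) / p ^ k = (z : ℕ) / p ^ k) (x : Fin (p ^ d)) :
    (g x : ℕ) / p ^ k = (x : ℕ) / p ^ k := by
  have hlt := Nat.div_eq_zero_iff_lt (x := (x : ℕ)) (pow_pos hp (k + 1))
  by_cases hx : (x : ℕ) < p ^ (k + 1)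
  · refine div_pow_eq_of_natCast_eq (apply_lt_of_mem_blockSubgroup hp hg hx) hx ?_
    have hdigit := (mem_blockSubgroup.mp hg).1 k hk x z (by
      rw [hlt.mpr hx, (Nat.div_eq_zero_iff_lt (pow_pos hp (k + 1))).mpr hz])
    rwa [hgz, sub_left_inj] at hdigit
  · rw [(mem_blockSubgroup.mp hg).2 x (mt hlt.mp hx)]

/-- Conjugating by `e i * (e j)⁻¹` carries the `j`-th level-`k` block subgroup onto the `i`-th;
and any `g` becomes block-preserving after multiplying by the inverse of the `e i` that moves `z`
into the block of `g z`. -/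
theorem blockSubgroup_succ_le (hp : 0 < p) (hk : k + 1 ≤ d) {M : Subgroup (Perm (Fin (p ^ d)))}
    {j : ℕ} (hj : j < p) (hjM : blockSubgroup p d k j ≤ M) {z : Fin (p ^ d)}
    (hz : (z : ℕ) < p ^ (k + 1))
    (hmove : ∀ i < p, ∃ e ∈ M, e ∈ blockSubgroup p d (k + 1) 0 ∧ (e z : ℕ) / p ^ k = i) :
    blockSubgroup p d (k + 1) 0 ≤ M := by
  choose! e heM heB hez using hmove
  have heW : ∀ i < p, e i ∈ wreathSubgroup p d := fun i hi => (mem_blockSubgroup.mp (heB i hi)).1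
  have hblocks : ∀ i < p, blockSubgroup p d k i ≤ M := by
    intro i hi g hg
    set f := e j * (e i)⁻¹
    have hfM : f ∈ M := mul_mem (heM j hj) (inv_mem (heM i hi))
    have hconj := conj_mem_blockSubgroup (mul_mem (heW j hj) (inv_mem (heW i hi))) (by omega)
      (hez i hi) hg
    rw [show f (e i z) = e j z by simp [f], hez j hj] at hconj
    rw [show g = f⁻¹ * (f * g * f⁻¹) * f by group]
    exact mul_mem (mul_mem (inv_mem hfM) (hjM hconj)) hfM
  intro g hg
  have hi : (g z : ℕ) / p ^ k < p := div_pow_lt (apply_lt_of_mem_blockSubgroup hp hg hz)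
  set i := (g z : ℕ) / p ^ k
  have hh : (e i)⁻¹ * g ∈ blockSubgroup p d (k + 1) 0 := mul_mem (inv_mem (heB i hi)) hg
  have hhz : (((e i)⁻¹ * g) z : ℕ) / p ^ k = (z : ℕ) / p ^ k := by
    have := IsWreathPerm.div_pow_eq (inv_mem (heW i hi)) (by omega) (hez i hi)
    simpa using this.symm
  have := mem_of_div_pow_apply_eq hp hblocks hh
    (div_pow_apply_eq_of_div_pow_apply_eq hp (by omega) hh hz hhz)
  simpa using mul_mem (heM i hi) this

lemma cycPerm_mem_Pgrp {j k : ℕ} (hj : 1 ≤ j) (hjk : j ≤ k) : cycPerm p d j ∈ Pgrp p d k :=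
  Subgroup.subset_closure ⟨j, ⟨hj, hjk⟩, rfl⟩

lemma cycPerm_pow_apply_zero (hp : 0 < p) (hk : k < d) {i : ℕ} (hi : i < p) {z : Fin (p ^ d)}
    (hz : (z : ℕ) = 0) : ((cycPerm p d (k + 1) ^ i) z : ℕ) = i * p ^ k := by
  rw [cycPerm_pow_apply hk i (by rw [hz]; exact pow_pos hp _), hz, zero_add,
    Nat.mod_eq_of_lt (mul_pow_lt hp hi)]

theorem Pgrp_eq_blockSubgroup (hp : 0 < p) (hk : k ≤ d) : Pgrp p d k = blockSubgroup p d k 0 := by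
  induction k with
  | zero => exact le_antisymm (Pgrp_le_blockSubgroup hp 0) (blockSubgroup_zero_zero ▸ bot_le)
  | succ k ih =>
    refine le_antisymm (Pgrp_le_blockSubgroup hp _) ?_
    have h0 : 0 < p ^ d := pow_pos hp d
    refine blockSubgroup_succ_le hp hk hp ((ih (by omega)).symm.trans_le (Pgrp_mono k.le_succ))
      (z := ⟨0, h0⟩) (pow_pos hp _) fun i hi => ?_
    have ht : cycPerm p d (k + 1) ^ i ∈ Pgrp p d (k + 1) :=
      pow_mem (cycPerm_mem_Pgrp (by omega) le_rfl) i
    refine ⟨_, ht, Pgrp_le_blockSubgroup hp _ ht, ?_⟩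
    rw [cycPerm_pow_apply_zero hp hk hi rfl, Nat.mul_div_cancel _ (pow_pos hp k)]

lemma exists_mem_Pgrp_apply_eq (hp : 0 < p) (hk : k ≤ d) {z : Fin (p ^ d)} (hz : (z : ℕ) = 0)
    {x : Fin (p ^ d)} (hx : (x : ℕ) < p ^ k) : ∃ w ∈ Pgrp p d k, w z = x := by
  induction k generalizing x with
  | zero => exact ⟨1, one_mem _, Fin.ext (by simp_all)⟩
  | succ k ih =>
    have hr : (x : ℕ) % p ^ k < p ^ d :=
      (Nat.mod_lt _ (pow_pos hp k)).trans_le (Nat.pow_le_pow_right hp (by omega))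
    obtain ⟨w, hw, hwz⟩ := ih (by omega) (x := ⟨_, hr⟩) (Nat.mod_lt _ (pow_pos hp k))
    refine ⟨cycPerm p d (k + 1) ^ ((x : ℕ) / p ^ k) * w,
      mul_mem (pow_mem (cycPerm_mem_Pgrp (by omega) le_rfl) _) (Pgrp_mono k.le_succ hw), ?_⟩
    apply Fin.ext
    have hr' : (x : ℕ) % p ^ k < p ^ (k + 1) :=
      (Nat.mod_lt _ (pow_pos hp k)).trans_le (Nat.pow_le_pow_right hp k.le_succ)
    rw [Perm.mul_apply, hwz, cycPerm_pow_apply (by omega) _ hr', Nat.mod_add_div',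
      Nat.mod_eq_of_lt hx]

/-- Each `σ w σ⁻¹` fixes `σ y` for a point `y` outside the first top-level block, hence preserves
every top-level block; as `P_{p^k}` is transitive on the first block, `σ` maps it into one block. -/
lemma map_conj_Pgrp_le_blockSubgroup (hp : 2 ≤ p) {σ : Perm (Fin (p ^ (k + 1)))}
    (hσ : ∀ w ∈ Pgrp p (k + 1) k, σ * w * σ⁻¹ ∈ blockSubgroup p (k + 1) (k + 1) 0)
    {z : Fin (p ^ (k + 1))} (hz : (z : ℕ) = 0) :
    (Pgrp p (k + 1) k).map (MulAut.conj σ).toMonoidHom ≤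
      blockSubgroup p (k + 1) k ((σ z : ℕ) / p ^ k) := by
  have hp0 : 0 < p := by omega
  have hpres : ∀ w ∈ Pgrp p (k + 1) k, ∀ x, ((σ * w * σ⁻¹) x : ℕ) / p ^ k = (x : ℕ) / p ^ k := by
    intro w hw
    let y : Fin (p ^ (k + 1)) := ⟨p ^ k, Nat.pow_lt_pow_right hp k.lt_succ_self⟩
    have hwy : w y = y := (mem_blockSubgroup.mp (Pgrp_le_blockSubgroup hp0 k hw)).2 y
      (by simp [y, Nat.div_self (pow_pos hp0 k)])
    refine div_pow_apply_eq_of_div_pow_apply_eq hp0 k.lt_succ_self (hσ w hw) (σ y).2 ?_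
    simp [Perm.mul_apply, hwy]
  refine Subgroup.map_le_iff_le_comap.mpr fun w hw => mem_blockSubgroup.mpr ⟨(hσ w hw).1, ?_⟩
  intro x hx
  have hx' : ((σ⁻¹ x : Fin _) : ℕ) / p ^ k ≠ 0 := by
    intro h0
    obtain ⟨w', hw', hw'z⟩ := exists_mem_Pgrp_apply_eq hp0 k.le_succ hz
      ((Nat.div_eq_zero_iff_lt (pow_pos hp0 k)).mp h0)
    apply hx
    simpa [Perm.mul_apply, hw'z] using hpres w' hw' (σ z)
  show σ (w (σ⁻¹ x)) = x
  rw [(mem_blockSubgroup.mp (Pgrp_le_blockSubgroup hp0 k hw)).2 _ hx']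
  exact σ.apply_symm_apply x

end IteratedWreath

theorem stmt3_general {p d : ℕ} (hp : p.Prime) (hd : 1 ≤ d)
    (P : Subgroup (Equiv.Perm (Fin (p ^ d)))) (hPle : P ≤ Pgrp p d d)
    -- (i) P contains a subgroup that is 𝔖_{p^d}-conjugate to P_{p^{d-1}}
    (σ : Equiv.Perm (Fin (p ^ d)))
    (hR : (Pgrp p d (d - 1)).map (MulAut.conj σ).toMonoidHom ≤ P)
    -- (ii) P contains an elementary abelian subgroup E of order p^d acting
    -- regularly on the p^d points
    (E : Subgroup (Equiv.Perm (Fin (p ^ d)))) (hEP : E ≤ P)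
    (hEreg : ∀ x y : Fin (p ^ d), ∃! g : E, (g : Equiv.Perm (Fin (p ^ d))) x = y) :
    P = Pgrp p d d := by
  obtain ⟨k, rfl⟩ : ∃ k, d = k + 1 := ⟨d - 1, by omega⟩
  rw [Nat.add_sub_cancel] at hR
  have hp0 := hp.pos
  have hPB : P ≤ blockSubgroup p (k + 1) (k + 1) 0 := hPle.trans (Pgrp_le_blockSubgroup hp0 _)
  have hPtrans : ∀ x y, ∃ e ∈ P, e x = y := fun x y => by
    obtain ⟨e, he, -⟩ := hEreg x y
    exact ⟨e, hEP e.2, he⟩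
  let z : Fin (p ^ (k + 1)) := ⟨0, pow_pos hp0 _⟩
  have hRB := map_conj_Pgrp_le_blockSubgroup hp.two_le (fun w hw => hPB (hR ⟨w, hw, rfl⟩))
    (z := z) rfl
  have hReq := Subgroup.eq_of_le_of_card_ge hRB <| by
    obtain ⟨e, he, hez⟩ := hPtrans (σ z) z
    calc Nat.card (blockSubgroup p (k + 1) k ((σ z : ℕ) / p ^ k))
        ≤ Nat.card (blockSubgroup p (k + 1) k ((e (σ z) : ℕ) / p ^ k)) :=
          card_blockSubgroup_le (mem_blockSubgroup.mp (hPB he)).1 k.le_succ (σ z)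
      _ = Nat.card (Pgrp p (k + 1) k) := by
          rw [hez, Pgrp_eq_blockSubgroup hp0 k.le_succ, Nat.zero_div]
      _ = _ := (Subgroup.card_map_of_injective (MulEquiv.injective _)).symm
  refine le_antisymm hPle ?_
  rw [Pgrp_eq_blockSubgroup hp0 le_rfl]
  refine blockSubgroup_succ_le hp0 le_rfl (div_pow_lt (σ z).2) (hReq ▸ hR) z.2 fun i hi => ?_
  obtain ⟨e, he, hez⟩ := hPtrans z ⟨i * p ^ k, mul_pow_lt hp0 hi⟩
  exact ⟨e, he, hPB he, by rw [hez, Nat.mul_div_cancel _ (pow_pos hp0 k)]⟩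

theorem stmt3 {p d : ℕ} (hp : p.Prime) (hd : 1 ≤ d)
    (P : Subgroup (Equiv.Perm (Fin (p ^ d)))) (hPle : P ≤ Pgrp p d d)
    -- (i) P contains a subgroup that is 𝔖_{p^d}-conjugate to P_{p^{d-1}}
    (σ : Equiv.Perm (Fin (p ^ d)))
    (hR : (Pgrp p d (d - 1)).map (MulAut.conj σ).toMonoidHom ≤ P)
    -- (ii) P contains an elementary abelian subgroup E of order p^d acting
    -- regularly on the p^d points
    (E : Subgroup (Equiv.Perm (Fin (p ^ d)))) (hEP : E ≤ P)
    (hEab : ∀ a ∈ E, ∀ b ∈ E, a * b = b * a)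
    (hEelem : ∀ a ∈ E, a ^ p = 1)
    (hEcard : Nat.card E = p ^ d)
    (hEreg : ∀ x y : Fin (p ^ d), ∃! g : E, (g : Equiv.Perm (Fin (p ^ d))) x = y) :
    P = Pgrp p d d :=
  stmt3_general hp hd P hPle σ hR E hEP hEreg
end

section
/- Let $p$ be a prime, $n = p + \sum_{i=2}^{t} m_i p^i$ with $t \geq 2$ and $m_t \neq 0$, and let $E = E_{p,1} \times \prod_{i=2}^{t}\prod_{j=1}^{m_i} E_{p^i,j} \leq \mathfrak{S}_n$ be the direct product of elementary abelian groups acting regularly on pairwise disjoint subsets of $\{1,\ldots,n\}$, where $E_{p,1}$ has support $\{1,\ldots,p\}$ and each $E_{p^i,j}$ (of order $p^i$) acts regularly on its support, and the supports of all factors partition $\{1,\ldots,n\}$. If $P$ is a maximal subgroup of $E$ with $E_{p,1} \not\leq P$, then $P$ contains a subgroup $Q \leq \prod_{i=2}^{t}\prod_{j=1}^{m_i} E_{p^i,j}$ that acts without fixed points on $\{p+1,\ldots,n\}$. -/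
/-!
Take `Q = P ⊓ E'`, where `E'` is the product of the factors `E_{p^i,j}`. As `P` has index `p`
in `E0 ⊔ E'`, `Q` has index at most `p` in `E'`. If `Q` fixed a point `x` of the support of
some `E_{p^i,j}`, the stabilizer of `x` in `E'` would contain `Q`, so the `E'`-orbit of `x`
would have length at most `p`; but it contains the regular `E_{p^i,j}`-orbit of `x`, of
length `p^i ≥ p^2`.
-/

namespace Subgroup

variable {G α : Type*} [Group G] [MulAction G α]

theorem ncard_orbit_le_relIndex {H K : Subgroup G} {x : α}
    (hfix : ∀ g ∈ H ⊓ K, g • x = x) (hH : H.relIndex K ≠ 0) :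
    (MulAction.orbit K x).ncard ≤ H.relIndex K := by
  have hle : (H ⊓ K).subgroupOf K ≤ MulAction.stabilizer K x :=
    fun g hg => hfix g (mem_subgroupOf.mp hg)
  rw [← MulAction.index_stabilizer, ← inf_relIndex_right]
  exact Nat.le_of_dvd (Nat.pos_of_ne_zero (inf_relIndex_right H K ▸ hH)) (index_dvd_of_le hle)

theorem card_le_ncard_orbit [Finite α] {L K : Subgroup G} (hLK : L ≤ K) {x : α}
    (hfree : ∀ g ∈ L, g • x = x → g = 1) :
    Nat.card L ≤ (MulAction.orbit K x).ncard := by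
  rw [← Nat.card_coe_set_eq]
  refine Nat.card_le_card_of_injective
    (fun g : L => ⟨(g : G) • x, ⟨inclusion hLK g, rfl⟩⟩) fun a b hab => ?_
  have hx : ((b⁻¹ * a : L) : G) • x = x := by
    simp only [coe_mul, coe_inv, mul_smul, inv_smul_eq_iff]
    exact congrArg Subtype.val hab
  exact (inv_mul_eq_one.mp (Subtype.ext (hfree _ (b⁻¹ * a).2 hx))).symm

end Subgroup

open Finset in
theorem stmt6_general {p t n : ℕ} (hp : p.Prime) (m : ℕ → ℕ)
    -- E_{p,1}: elementary abelian of order p, acting regularly on {1,…,p}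
    -- (written 0-indexed: on the points x with x < p)
    (E0 : Subgroup (Equiv.Perm (Fin n)))
    -- the factors E_{p^i,j}, 2 ≤ i ≤ t, 1 ≤ j ≤ m i, of order p^i,
    -- acting regularly on their supports S i j
    (E : ℕ → ℕ → Subgroup (Equiv.Perm (Fin n))) (S : ℕ → ℕ → Set (Fin n))
    (hcard : ∀ i ∈ Icc 2 t, ∀ j ∈ Icc 1 (m i), Nat.card (E i j) = p ^ i)
    (hreg : ∀ i ∈ Icc 2 t, ∀ j ∈ Icc 1 (m i), ∀ x ∈ S i j, ∀ y ∈ S i j,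
      ∃! g : E i j, (g : Equiv.Perm (Fin n)) x = y)
    -- the supports S i j are contained in {p+1,…,n}, are pairwise disjoint,
    -- and together with {1,…,p} they partition {1,…,n}
    (hcover : ∀ x : Fin n, p ≤ (x : ℕ) → ∃ i ∈ Icc 2 t, ∃ j ∈ Icc 1 (m i), x ∈ S i j)
    -- P is a maximal subgroup (i.e. of index p) of E = E0 × ∏_{i,j} E_{p^i,j}
    -- with E_{p,1} = E0 not contained in P
    (P : Subgroup (Equiv.Perm (Fin n)))
    (hPmax : P.relIndex (E0 ⊔ ⨆ i ∈ Icc 2 t, ⨆ j ∈ Icc 1 (m i), E i j) = p) :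
    ∃ Q : Subgroup (Equiv.Perm (Fin n)), Q ≤ P ∧
      Q ≤ (⨆ i ∈ Icc 2 t, ⨆ j ∈ Icc 1 (m i), E i j) ∧
      ∀ x : Fin n, p ≤ (x : ℕ) → ∃ g ∈ Q, g x ≠ x := by
  set E' := ⨆ i ∈ Icc 2 t, ⨆ j ∈ Icc 1 (m i), E i j
  refine ⟨P ⊓ E', inf_le_left, inf_le_right, fun x hx => ?_⟩
  by_contra! hfix
  obtain ⟨i, hi, j, hj, hxS⟩ := hcover x hx
  have hEij : E i j ≤ E' :=
    (le_biSup _ hj).trans (le_biSup (fun i => ⨆ j ∈ Icc 1 (m i), E i j) hi)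
  have hfree : ∀ g ∈ E i j, g • x = x → g = 1 := fun g hg hgx => congrArg Subtype.val
    ((hreg i hi j hj x hxS x hxS).unique (y₁ := ⟨g, hg⟩) (y₂ := 1) hgx rfl)
  have hP : P.relIndex E' ≤ p :=
    hPmax ▸ Subgroup.relIndex_le_of_le_right le_sup_right (hPmax ▸ hp.ne_zero)
  have hp_lt : p ^ 1 < p ^ i := Nat.pow_lt_pow_right hp.one_lt (mem_Icc.mp hi).1
  have horbit := calc p ^ i = Nat.card (E i j) := (hcard i hi j hj).symm
    _ ≤ (MulAction.orbit E' x).ncard := Subgroup.card_le_ncard_orbit hEij hfree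
    _ ≤ P.relIndex E' := Subgroup.ncard_orbit_le_relIndex hfix Subgroup.index_ne_zero_of_finite
  rw [pow_one] at hp_lt
  omega

open Finset in
theorem stmt6 {p t n : ℕ} (hp : p.Prime) (ht : 2 ≤ t) (m : ℕ → ℕ) (hmt : m t ≠ 0)
    (hn : n = p + ∑ i ∈ Icc 2 t, m i * p ^ i)
    -- E_{p,1}: elementary abelian of order p, acting regularly on {1,…,p}
    -- (written 0-indexed: on the points x with x < p)
    (E0 : Subgroup (Equiv.Perm (Fin n)))
    (hE0card : Nat.card E0 = p)
    (hE0supp : ∀ g ∈ E0, ∀ x : Fin n, ¬ (x : ℕ) < p → g x = x)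
    (hE0reg : ∀ x y : Fin n, (x : ℕ) < p → (y : ℕ) < p →
      ∃! g : E0, (g : Equiv.Perm (Fin n)) x = y)
    -- the factors E_{p^i,j}, 2 ≤ i ≤ t, 1 ≤ j ≤ m i, of order p^i,
    -- acting regularly on their supports S i j
    (E : ℕ → ℕ → Subgroup (Equiv.Perm (Fin n))) (S : ℕ → ℕ → Set (Fin n))
    (hcard : ∀ i ∈ Icc 2 t, ∀ j ∈ Icc 1 (m i), Nat.card (E i j) = p ^ i)
    (helemab : ∀ i ∈ Icc 2 t, ∀ j ∈ Icc 1 (m i),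
      (∀ a ∈ E i j, a ^ p = 1) ∧ ∀ a ∈ E i j, ∀ b ∈ E i j, a * b = b * a)
    (hsupp : ∀ i ∈ Icc 2 t, ∀ j ∈ Icc 1 (m i), ∀ g ∈ E i j, ∀ x ∉ S i j, g x = x)
    (hreg : ∀ i ∈ Icc 2 t, ∀ j ∈ Icc 1 (m i), ∀ x ∈ S i j, ∀ y ∈ S i j,
      ∃! g : E i j, (g : Equiv.Perm (Fin n)) x = y)
    -- the supports S i j are contained in {p+1,…,n}, are pairwise disjoint,
    -- and together with {1,…,p} they partition {1,…,n}
    (hSge : ∀ i ∈ Icc 2 t, ∀ j ∈ Icc 1 (m i), ∀ x ∈ S i j, p ≤ (x : ℕ))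
    (hdisj : ∀ i ∈ Icc 2 t, ∀ j ∈ Icc 1 (m i), ∀ i' ∈ Icc 2 t, ∀ j' ∈ Icc 1 (m i'),
      (i, j) ≠ (i', j') → Disjoint (S i j) (S i' j'))
    (hcover : ∀ x : Fin n, p ≤ (x : ℕ) → ∃ i ∈ Icc 2 t, ∃ j ∈ Icc 1 (m i), x ∈ S i j)
    -- P is a maximal subgroup (i.e. of index p) of E = E0 × ∏_{i,j} E_{p^i,j}
    -- with E_{p,1} = E0 not contained in P
    (P : Subgroup (Equiv.Perm (Fin n)))
    (hPle : P ≤ E0 ⊔ ⨆ i ∈ Icc 2 t, ⨆ j ∈ Icc 1 (m i), E i j)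
    (hPmax : P.relIndex (E0 ⊔ ⨆ i ∈ Icc 2 t, ⨆ j ∈ Icc 1 (m i), E i j) = p)
    (hE0P : ¬ E0 ≤ P) :
    ∃ Q : Subgroup (Equiv.Perm (Fin n)), Q ≤ P ∧
      Q ≤ (⨆ i ∈ Icc 2 t, ⨆ j ∈ Icc 1 (m i), E i j) ∧
      ∀ x : Fin n, p ≤ (x : ℕ) → ∃ g ∈ Q, g x ≠ x :=
  stmt6_general hp m E0 E S hcard hreg hcover P hPmax
end
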